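/- (Löwner ellipsoid) For every integer n ≥ 1 and every symmetric convex body C in ℝⁿ, there exists a unique ellipsoid L(C) containing C whose Lebesgue volume is minimal among all ellipsoids containing C; that is, there exists an ellipsoid D ⊇ C such that vol(D') ≥ vol(D) for every ellipsoid D' ⊇ C, and any two such minimal-volume ellipsoids coincide as sets. -/

import Mathlib

/-!
An origin-centred ellipsoid is `{x | xᵀ M x ≤ 1}` for a positive definite `M`, with volume
`vol(Bⁿ) / √(det M)`; so minimising the volume of an ellipsoid containing `C` means maximising
`det` over the set of positive semidefinite `M` with `xᵀ M x ≤ 1` on `C`. Since `C` contains a ball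
around `0` (by symmetry and convexity) this set is compact, and since `C` is bounded it contains a
matrix of positive determinant, so a maximiser exists. The set is convex, and `det` is strictly
log-concave on positive definite matrices: for `det A = det B`, writing `A = Pᴴ P`, the matrix
`½ (A + B)` is congruent to `½ (1 + N)` with `det N = 1`, whose determinant `∏ (1 + μᵢ) / 2` exceeds
`∏ √μᵢ = 1` unless all eigenvalues `μᵢ` of `N` are `1`. Hence the maximiser is unique.
-/

open MeasureTheory

/-- An ellipsoid in `ℝⁿ` is the image of the closed Euclidean unit ball under an
invertible linear map. -/
def IsEllipsoid (n : ℕ) (D : Set (EuclideanSpace ℝ (Fin n))) : Prop :=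
  ∃ L : EuclideanSpace ℝ (Fin n) ≃ₗ[ℝ] EuclideanSpace ℝ (Fin n),
    D = L '' Metric.closedBall 0 1

open Matrix Metric WithLp

theorem Real.eq_one_of_prod_half_one_add_le_one {ι : Type*} [Fintype ι] {μ : ι → ℝ}
    (hpos : ∀ i, 0 < μ i) (hprod : ∏ i, μ i = 1) (hle : ∏ i, (1 + μ i) / 2 ≤ 1) (i : ι) :
    μ i = 1 := by
  have hsqrt_le : ∀ j, √(μ j) ≤ (1 + μ j) / 2 := fun j => by
    nlinarith [Real.sq_sqrt (hpos j).le, sq_nonneg (√(μ j) - 1)]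
  by_contra hne
  have hlt : √(μ i) < (1 + μ i) / 2 := by
    refine (hsqrt_le i).lt_of_ne fun h => hne ?_
    nlinarith [Real.sq_sqrt (hpos i).le, Real.sqrt_nonneg (μ i)]
  have hprod_lt : ∏ j, √(μ j) < ∏ j, (1 + μ j) / 2 :=
    Finset.prod_lt_prod (fun j _ => Real.sqrt_pos.mpr (hpos j)) (fun j _ => hsqrt_le j)
      ⟨i, Finset.mem_univ i, hlt⟩
  rw [← Real.sqrt_prod _ fun j _ => (hpos j).le, hprod, Real.sqrt_one] at hprod_lt
  linarith

theorem Convex.zero_mem_interior_of_neg_eq {E : Type*} [AddCommGroup E] [Module ℝ E]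
    [TopologicalSpace E] [IsTopologicalAddGroup E] [ContinuousConstSMul ℝ E] {C : Set E}
    (hC : Convex ℝ C) (hneg : -C = C) (hint : (interior C).Nonempty) :
    (0 : E) ∈ interior C := by
  obtain ⟨x, hx⟩ := hint
  have hx' : -x ∈ interior C := by
    have h := (Homeomorph.neg E).image_interior C
    simp only [Homeomorph.coe_neg, Set.image_neg_eq_neg, hneg] at h
    exact h ▸ Set.neg_mem_neg.mpr hx
  simpa using hC.interior hx hx' (by norm_num : (0 : ℝ) ≤ 2⁻¹) (by norm_num : (0 : ℝ) ≤ 2⁻¹)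
    (by norm_num)

section Determinant

variable {ι : Type*} [Fintype ι] [DecidableEq ι]

theorem Matrix.PosDef.eq_one_of_det_half_one_add_le_one {N : Matrix ι ι ℝ} (hN : N.PosDef)
    (hdet : N.det = 1) (hle : ((2 : ℝ)⁻¹ • (1 + N)).det ≤ 1) : N = 1 := by
  set μ := hN.isHermitian.eigenvalues
  set conj := Unitary.conjStarAlgAut ℝ (Matrix ι ι ℝ) hN.isHermitian.eigenvectorUnitary
  have hspec : N = conj (diagonal μ) := hN.isHermitian.spectral_theorem
  have hdet_conj : ∀ X, (conj X).det = X.det := fun X => by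
    have hU : (hN.isHermitian.eigenvectorUnitary : Matrix ι ι ℝ).det *
        (star (hN.isHermitian.eigenvectorUnitary : Matrix ι ι ℝ)).det = 1 := by
      rw [← det_mul, Unitary.mul_star_self_of_mem (SetLike.coe_mem _), det_one]
    simp only [conj, Unitary.conjStarAlgAut_apply, det_mul]
    linear_combination X.det * hU
  have hhalf : (2 : ℝ)⁻¹ • (1 + N) = conj (diagonal fun i => (1 + μ i) / 2) := by
    rw [hspec, ← map_one conj, ← map_add, ← map_smul]
    congr 1
    ext i j
    by_cases h : i = j <;> simp [h, diagonal]; ring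
  have hμ : μ = 1 := funext <| Real.eq_one_of_prod_half_one_add_le_one hN.eigenvalues_pos
    (by rw [← hdet, hspec, hdet_conj, det_diagonal])
    (by rwa [hhalf, hdet_conj, det_diagonal] at hle)
  rw [hspec, hμ, Pi.one_def, diagonal_one, map_one]

open scoped MatrixOrder in
theorem Matrix.PosDef.eq_of_det_half_add_le {A B : Matrix ι ι ℝ} (hA : A.PosDef)
    (hB : B.PosDef) (hdet : A.det = B.det) (hle : ((2 : ℝ)⁻¹ • (A + B)).det ≤ A.det) :
    A = B := by
  obtain ⟨P, hP, hAP⟩ :=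
    CStarAlgebra.isStrictlyPositive_iff_eq_star_mul_self.mp hA.isStrictlyPositive
  rw [star_eq_conjTranspose] at hAP
  set N := P⁻¹ᴴ * B * P⁻¹
  have hPN : Pᴴ * N * P = B := by
    have hPP : P⁻¹ * P = 1 := nonsing_inv_mul P ((isUnit_iff_isUnit_det P).mp hP)
    calc Pᴴ * N * P = (P⁻¹ * P)ᴴ * B * (P⁻¹ * P) := by
          simp only [N, conjTranspose_mul, mul_assoc]
      _ = B := by rw [hPP, conjTranspose_one, one_mul, mul_one]
  have hN : N.PosDef := hB.conjTranspose_mul_mul_same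
    (mulVec_injective_iff_isUnit.mpr (isUnit_nonsing_inv_iff.mpr hP))
  have hdet_conj : ∀ X, (Pᴴ * X * P).det = A.det * X.det := fun X => by
    simp only [hAP, det_mul]; ring
  have hNdet : N.det = 1 := by
    have h := hdet_conj N
    rw [hPN, ← hdet] at h
    exact (mul_eq_left₀ hA.det_pos.ne').mp h.symm
  have hhalf : (2 : ℝ)⁻¹ • (A + B) = Pᴴ * ((2 : ℝ)⁻¹ • (1 + N)) * P := by
    rw [Matrix.mul_smul, Matrix.smul_mul, mul_add, add_mul, mul_one, hPN, hAP]
  rw [hhalf, hdet_conj] at hle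
  have hN_one : N = 1 :=
    hN.eq_one_of_det_half_one_add_le_one hNdet ((mul_le_iff_le_one_right hA.det_pos).mp hle)
  rw [← hPN, hN_one, mul_one, hAP]

theorem Convex.eq_of_isMaxOn_det {S : Set (Matrix ι ι ℝ)} (hS : Convex ℝ S)
    (hpsd : ∀ M ∈ S, M.PosSemidef) {M₁ M₂ : Matrix ι ι ℝ} (h₁ : M₁ ∈ S) (h₂ : M₂ ∈ S)
    (hmax₁ : IsMaxOn det S M₁) (hmax₂ : IsMaxOn det S M₂) (hpos : 0 < M₁.det) : M₁ = M₂ := by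
  have hdet : M₁.det = M₂.det := le_antisymm (hmax₂ h₁) (hmax₁ h₂)
  have hpd : ∀ M ∈ S, M.det = M₁.det → M.PosDef := fun M hM h =>
    (hpsd M hM).posDef_iff_det_ne_zero.mpr (h ▸ hpos.ne')
  refine (hpd M₁ h₁ rfl).eq_of_det_half_add_le (hpd M₂ h₂ hdet.symm) hdet (hmax₁ ?_)
  rw [smul_add]
  exact hS h₁ h₂ (by norm_num) (by norm_num) (by norm_num)

end Determinant

section Ellipsoid

variable {ι : Type*} [Fintype ι]

def ellipsoidOf (M : Matrix ι ι ℝ) : Set (EuclideanSpace ℝ ι) :=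
  {x | ofLp x ⬝ᵥ M *ᵥ ofLp x ≤ 1}

theorem ellipsoidOf_inv_sq_smul_one [DecidableEq ι] {R : ℝ} (hR : 0 < R) :
    ellipsoidOf ((R ^ 2)⁻¹ • (1 : Matrix ι ι ℝ)) = closedBall 0 R := by
  ext x
  have hx : ofLp x ⬝ᵥ ofLp x = ‖x‖ ^ 2 := by
    rw [EuclideanSpace.real_norm_sq_eq]; simp [dotProduct, sq]
  simp only [ellipsoidOf, Set.mem_ofPred_eq, smul_mulVec, one_mulVec, dotProduct_smul, hx,
    smul_eq_mul, mem_closedBall_zero_iff]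
  rw [inv_mul_le_one₀ (by positivity), sq_le_sq₀ (norm_nonneg _) hR.le]

variable [DecidableEq ι]

theorem dotProduct_conjTranspose_mul_self_mulVec (A : Matrix ι ι ℝ) (x : EuclideanSpace ℝ ι) :
    ofLp x ⬝ᵥ (Aᴴ * A) *ᵥ ofLp x = ‖toEuclideanLin A x‖ ^ 2 := by
  rw [EuclideanSpace.real_norm_sq_eq, ofLp_toLpLin, toLin'_apply, ← mulVec_mulVec,
    dotProduct_mulVec, vecMul_conjTranspose]
  simp [dotProduct, sq]

theorem ellipsoidOf_conjTranspose_mul_self (A : Matrix ι ι ℝ) :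
    ellipsoidOf (Aᴴ * A) = toEuclideanLin A ⁻¹' closedBall 0 1 := by
  ext x
  simp only [ellipsoidOf, Set.mem_ofPred_eq, dotProduct_conjTranspose_mul_self_mulVec,
    Set.mem_preimage, mem_closedBall_zero_iff]
  exact sq_le_one_iff₀ (norm_nonneg _)

theorem LinearMap.det_toEuclideanLin {𝕜 : Type*} [RCLike 𝕜] (A : Matrix ι ι 𝕜) :
    LinearMap.det (toEuclideanLin A) = A.det := by
  rw [toEuclideanLin_eq_toLin_orthonormal, LinearMap.det_toLin]

open scoped MatrixOrder in
theorem Matrix.PosDef.exists_eq_conjTranspose_mul_self {M : Matrix ι ι ℝ} (hM : M.PosDef) :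
    ∃ A : Matrix ι ι ℝ, A.det ≠ 0 ∧ M = Aᴴ * A := by
  obtain ⟨A, hA, rfl⟩ :=
    CStarAlgebra.isStrictlyPositive_iff_eq_star_mul_self.mp hM.isStrictlyPositive
  exact ⟨A, ((isUnit_iff_isUnit_det A).mp hA).ne_zero, rfl⟩

theorem Matrix.PosDef.volume_ellipsoidOf {M : Matrix ι ι ℝ} (hM : M.PosDef) :
    volume (ellipsoidOf M) =
      ENNReal.ofReal (√M.det)⁻¹ * volume (closedBall (0 : EuclideanSpace ℝ ι) 1) := by
  obtain ⟨A, hA, rfl⟩ := hM.exists_eq_conjTranspose_mul_self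
  have hdet : (Aᴴ * A).det = A.det ^ 2 := by simp [det_mul, sq]
  rw [ellipsoidOf_conjTranspose_mul_self,
    Measure.addHaar_preimage_linearMap _ (by rwa [LinearMap.det_toEuclideanLin]),
    LinearMap.det_toEuclideanLin, abs_inv, hdet, Real.sqrt_sq_eq_abs]

theorem volume_ellipsoidOf_le_volume_ellipsoidOf_iff {M M' : Matrix ι ι ℝ} (hM : M.PosDef)
    (hM' : M'.PosDef) : volume (ellipsoidOf M) ≤ volume (ellipsoidOf M') ↔ M'.det ≤ M.det := by
  have hball₀ : volume (closedBall (0 : EuclideanSpace ℝ ι) 1) ≠ 0 :=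
    (measure_closedBall_pos _ _ one_pos).ne'
  have hball_top : volume (closedBall (0 : EuclideanSpace ℝ ι) 1) ≠ ⊤ :=
    measure_closedBall_lt_top.ne
  rw [hM.volume_ellipsoidOf, hM'.volume_ellipsoidOf,
    ENNReal.mul_le_mul_iff_left hball₀ hball_top, ENNReal.ofReal_le_ofReal_iff (by positivity),
    inv_le_inv₀ (Real.sqrt_pos.mpr hM.det_pos) (Real.sqrt_pos.mpr hM'.det_pos),
    Real.sqrt_le_sqrt_iff hM.det_pos.le]

theorem exists_linearEquiv_eq_image_closedBall_iff {D : Set (EuclideanSpace ℝ ι)} :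
    (∃ L : EuclideanSpace ℝ ι ≃ₗ[ℝ] EuclideanSpace ℝ ι, D = L '' closedBall 0 1) ↔
      ∃ M : Matrix ι ι ℝ, M.PosDef ∧ D = ellipsoidOf M := by
  constructor
  · rintro ⟨L, rfl⟩
    set A := toEuclideanLin.symm L.symm.toLinearMap
    have hA : toEuclideanLin A = L.symm := toEuclideanLin.apply_symm_apply _
    refine ⟨Aᴴ * A, PosDef.conjTranspose_mul_self A ?_, ?_⟩
    · refine mulVec_injective_iff_isUnit.mpr ((isUnit_iff_isUnit_det A).mpr ?_)
      rw [← LinearMap.det_toEuclideanLin, hA]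
      exact L.symm.isUnit_det'
    · rw [ellipsoidOf_conjTranspose_mul_self, hA, L.image_eq_preimage_symm]
      rfl
  · rintro ⟨M, hM, rfl⟩
    obtain ⟨A, hA, rfl⟩ := hM.exists_eq_conjTranspose_mul_self
    set L := (toEuclideanLin A).equivOfDetNeZero (by rwa [LinearMap.det_toEuclideanLin])
    refine ⟨L.symm, ?_⟩
    rw [ellipsoidOf_conjTranspose_mul_self, L.symm.image_eq_preimage_symm]
    rfl

end Ellipsoid

theorem isEllipsoid_iff {n : ℕ} {D : Set (EuclideanSpace ℝ (Fin n))} :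
    IsEllipsoid n D ↔ ∃ M : Matrix (Fin n) (Fin n) ℝ, M.PosDef ∧ D = ellipsoidOf M :=
  exists_linearEquiv_eq_image_closedBall_iff

theorem convex_setOf_posSemidef {ι : Type*} : Convex ℝ {M : Matrix ι ι ℝ | M.PosSemidef} :=
  fun _ hA _ hB _ _ ha hb _ => (hA.smul ha).add (hB.smul hb)

section EnclosingForms

variable {ι : Type*} [Fintype ι]

theorem isClosed_setOf_posSemidef : IsClosed {M : Matrix ι ι ℝ | M.PosSemidef} := by
  simp only [posSemidef_iff_dotProduct_mulVec, Set.ofPred_and, Set.ofPred_forall]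
  exact (isClosed_eq continuous_id.matrix_conjTranspose continuous_id).inter
    (isClosed_iInter fun x => isClosed_le continuous_const (by fun_prop))

def enclosingForms (C : Set (EuclideanSpace ℝ ι)) : Set (Matrix ι ι ℝ) :=
  {M | M.PosSemidef ∧ C ⊆ ellipsoidOf M}

theorem enclosingForms_eq (C : Set (EuclideanSpace ℝ ι)) :
    enclosingForms C = {M | M.PosSemidef} ∩ ⋂ x ∈ C, {M | ofLp x ⬝ᵥ M *ᵥ ofLp x ≤ 1} := by
  ext M
  simp [enclosingForms, ellipsoidOf, Set.subset_def]

theorem isClosed_enclosingForms (C : Set (EuclideanSpace ℝ ι)) :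
    IsClosed (enclosingForms C) := by
  rw [enclosingForms_eq]
  exact isClosed_setOf_posSemidef.inter
    (isClosed_biInter fun x _ => isClosed_le (by fun_prop) continuous_const)

theorem convex_enclosingForms (C : Set (EuclideanSpace ℝ ι)) :
    Convex ℝ (enclosingForms C) := by
  rw [enclosingForms_eq]
  refine convex_setOf_posSemidef.inter (convex_iInter₂ fun x _ => convex_halfSpace_le ?_ 1)
  constructor <;> intros <;> simp [add_mulVec, smul_mulVec]

variable [DecidableEq ι]

theorem dotProduct_mulVec_single_add_single (M : Matrix ι ι ℝ) (i j : ι) (a b : ℝ) :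
    ofLp (EuclideanSpace.single i a + EuclideanSpace.single j b) ⬝ᵥ
        M *ᵥ ofLp (EuclideanSpace.single i a + EuclideanSpace.single j b) =
      a ^ 2 * M i i + b ^ 2 * M j j + a * b * (M i j + M j i) := by
  simp only [ofLp_add, PiLp.ofLp_single, mulVec_add, mulVec_single, dotProduct_add,
    add_dotProduct, single_dotProduct, Pi.smul_apply, op_smul_eq_mul, col_apply]
  ring

theorem abs_apply_le_of_closedBall_subset_ellipsoidOf {M : Matrix ι ι ℝ} (hM : M.PosSemidef)
    {ρ : ℝ} (hρ : 0 < ρ) (hball : closedBall 0 ρ ⊆ ellipsoidOf M) (i j : ι) :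
    |M i j| ≤ (ρ ^ 2)⁻¹ := by
  have hsymm : M j i = M i j := hM.isHermitian.apply i j
  set v : ℝ → EuclideanSpace ℝ ι := fun b =>
    EuclideanSpace.single i (ρ / 2) + EuclideanSpace.single j b
  have hq : ∀ b, ofLp (v b) ⬝ᵥ M *ᵥ ofLp (v b) =
      (ρ / 2) ^ 2 * M i i + b ^ 2 * M j j + ρ / 2 * b * (2 * M i j) := fun b => by
    rw [dotProduct_mulVec_single_add_single, hsymm]; ring
  have hle : ∀ b, |b| = ρ / 2 → ofLp (v b) ⬝ᵥ M *ᵥ ofLp (v b) ≤ 1 := fun b hb => hball <| by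
    rw [mem_closedBall_zero_iff]
    calc ‖v b‖ ≤ ‖EuclideanSpace.single i (ρ / 2)‖ + ‖EuclideanSpace.single j b‖ :=
          norm_add_le _ _
      _ = ρ := by simp [hb, abs_of_pos hρ]
  have hnonneg : ∀ b, 0 ≤ ofLp (v b) ⬝ᵥ M *ᵥ ofLp (v b) := fun b => by
    simpa using hM.dotProduct_mulVec_nonneg (ofLp (v b))
  have h₁ := hle (ρ / 2) (abs_of_pos (half_pos hρ))
  have h₂ := hle (-(ρ / 2)) (by rw [abs_neg, abs_of_pos (half_pos hρ)])
  have h₃ := hnonneg (ρ / 2)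
  have h₄ := hnonneg (-(ρ / 2))
  rw [hq] at h₁ h₂ h₃ h₄
  have hbound : |M i j * ρ ^ 2| ≤ 1 := abs_le.mpr ⟨by nlinarith, by nlinarith⟩
  rwa [abs_mul, abs_of_pos (by positivity : 0 < ρ ^ 2), ← le_div_iff₀ (by positivity),
    one_div] at hbound

theorem exists_posDef_isMaxOn_det_enclosingForms {C : Set (EuclideanSpace ℝ ι)}
    (hC₀ : 0 ∈ interior C) (hC : Bornology.IsBounded C) :
    ∃ M ∈ enclosingForms C, M.PosDef ∧ IsMaxOn det (enclosingForms C) M := by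
  obtain ⟨ρ, hρ, hρC⟩ := nhds_basis_closedBall.mem_iff.mp (mem_interior_iff_mem_nhds.mp hC₀)
  obtain ⟨R, hR, hCR⟩ := hC.subset_closedBall_lt 0 0
  have hball : (R ^ 2)⁻¹ • (1 : Matrix ι ι ℝ) ∈ enclosingForms C :=
    ⟨PosSemidef.one.smul (by positivity), by rwa [ellipsoidOf_inv_sq_smul_one hR]⟩
  have hcompact : IsCompact (enclosingForms C) := by
    refine (isCompact_univ_pi fun _ => isCompact_univ_pi fun _ =>
      isCompact_Icc (a := -(ρ ^ 2)⁻¹) (b := (ρ ^ 2)⁻¹)).of_isClosed_subset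
        (isClosed_enclosingForms C) ?_
    rintro M ⟨hM, hCM⟩ i - j -
    exact abs_le.mp (abs_apply_le_of_closedBall_subset_ellipsoidOf hM hρ (hρC.trans hCM) i j)
  obtain ⟨M, hMS, hmax⟩ : ∃ M ∈ enclosingForms C, IsMaxOn det (enclosingForms C) M :=
    hcompact.exists_isMaxOn ⟨_, hball⟩ (by fun_prop)
  have hpos : 0 < M.det := by
    refine lt_of_lt_of_le ?_ (hmax hball)
    rw [det_smul, det_one, mul_one]
    positivity
  exact ⟨M, hMS, hMS.1.posDef_iff_det_ne_zero.mpr hpos.ne', hmax⟩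

end EnclosingForms

theorem loewner_ellipsoid_general (n : ℕ)
    (C : Set (EuclideanSpace ℝ (Fin n)))
    (hC_conv : Convex ℝ C) (hC_comp : IsCompact C)
    (hC_int : (interior C).Nonempty) (hC_symm : C = -C) :
    ∃! D : Set (EuclideanSpace ℝ (Fin n)),
      IsEllipsoid n D ∧ C ⊆ D ∧
        ∀ D' : Set (EuclideanSpace ℝ (Fin n)),
          IsEllipsoid n D' → C ⊆ D' → volume D ≤ volume D' := by
  obtain ⟨M, hMC, hM, hmax⟩ := exists_posDef_isMaxOn_det_enclosingForms
    (hC_conv.zero_mem_interior_of_neg_eq hC_symm.symm hC_int) hC_comp.isBounded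
  have hD : IsEllipsoid n (ellipsoidOf M) := isEllipsoid_iff.mpr ⟨M, hM, rfl⟩
  refine ⟨ellipsoidOf M, ⟨hD, hMC.2, ?_⟩, ?_⟩
  · rintro D' hD' hCD'
    obtain ⟨M', hM', rfl⟩ := isEllipsoid_iff.mp hD'
    exact (volume_ellipsoidOf_le_volume_ellipsoidOf_iff hM hM').mpr
      (hmax ⟨hM'.posSemidef, hCD'⟩)
  · rintro D' ⟨hD', hCD', hD'_min⟩
    obtain ⟨M', hM', rfl⟩ := isEllipsoid_iff.mp hD'
    have hdet : M.det ≤ M'.det :=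
      (volume_ellipsoidOf_le_volume_ellipsoidOf_iff hM' hM).mp (hD'_min _ hD hMC.2)
    have hmax' : IsMaxOn det (enclosingForms C) M' := fun N hN => (hmax hN).trans hdet
    rw [(convex_enclosingForms C).eq_of_isMaxOn_det (fun _ h => h.1) hMC ⟨hM'.posSemidef, hCD'⟩
      hmax hmax' hM.det_pos]

/-- **Löwner ellipsoid.** Every symmetric convex body `C` in `ℝⁿ` is contained in a unique
ellipsoid of minimal volume among all ellipsoids containing `C`. -/
theorem loewner_ellipsoid (n : ℕ) (hn : 1 ≤ n)
    (C : Set (EuclideanSpace ℝ (Fin n)))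
    (hC_conv : Convex ℝ C) (hC_comp : IsCompact C)
    (hC_int : (interior C).Nonempty) (hC_symm : C = -C) :
    ∃! D : Set (EuclideanSpace ℝ (Fin n)),
      IsEllipsoid n D ∧ C ⊆ D ∧
        ∀ D' : Set (EuclideanSpace ℝ (Fin n)),
          IsEllipsoid n D' → C ⊆ D' → volume D ≤ volume D' :=
  loewner_ellipsoid_general n C hC_conv hC_comp hC_int hC_symm
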